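/- Let F be a Borel probability measure on [0,1], θ₁, θ₂ > 0, θ = θ₁+θ₂, and L g(x) = (1/2)x(1−x)E[g''(x(1−W)+WV)] + (1/2)(θ₁−θx)g'(x). Set λ_n = (n/2)( (n−1) E[(1−W)^{n−2}] + θ ) and λ_n° = (n/2)( (n−1) E[(1−W)^{n−2}] + θ₁ ). Suppose (g_n)_{n≥0} is a sequence of polynomials with g_0 = 1 satisfying L g_n(x) = −λ_n g_n(x) + λ_n° g_{n−1}(x) for all n ≥ 1 and all x ∈ [0,1], and suppose μ is a Borel probability measure on [0,1] with ∫ L g dμ = 0 for every polynomial g. Then for every n ≥ 1: ∫ g_n dμ = ∏_{j=1}^{n} ( (j−1) E[(1−W)^{j−2}] + θ₁ ) / ∏_{j=1}^{n} ( (j−1) E[(1−W)^{j−2}] + θ ). -/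

import Mathlib

/-!
Integrating the eigenrelation `L g_n = -λ_n g_n + λ_n° g_{n-1}` against the stationary `μ` kills
the generator term, so `λ_n ∫ g_n dμ = λ_n° ∫ g_{n-1} dμ`. Since `E[(1-W)^j] ≥ 0`, the eigenvalue
`λ_n` is positive, and the product formula follows by induction from `∫ g_0 dμ = 1`.
-/

open MeasureTheory Set

/-- The two-type Λ-Fleming-Viot generator with mutation,
`L g(x) = (1/2) x(1-x) E[g''(x(1-W)+WV)] + (1/2)(θ₁ - θ x) g'(x)`,
where `W = U⬝Y`, `Y ∼ F`, `U` with density `2u` on `(0,1)`, `V` uniform on `(0,1)`. -/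
noncomputable def Lop (F : Measure ℝ) (θ₁ θ₂ : ℝ) (g : ℝ → ℝ) (x : ℝ) : ℝ :=
  (1/2) * x * (1 - x) *
    (∫ y, (∫ u in Set.Ioo (0:ℝ) 1, (∫ v in Set.Ioo (0:ℝ) 1,
      deriv (deriv g) (x * (1 - u * y) + u * y * v)) * (2 * u)) ∂F)
  + (1/2) * (θ₁ - (θ₁ + θ₂) * x) * deriv g x

/-- `E[(1-W)^j]` where `W = U⬝Y`. -/
noncomputable def expMom (F : Measure ℝ) (j : ℕ) : ℝ :=
  ∫ y, (∫ u in Set.Ioo (0:ℝ) 1, (1 - u * y) ^ j * (2 * u)) ∂F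

lemma expMom_nonneg (F : Measure ℝ) (hF : F (Icc (0:ℝ) 1)ᶜ = 0) (j : ℕ) :
    0 ≤ expMom F j := by
  apply integral_nonneg_of_ae
  filter_upwards [ae_iff.mpr hF] with y hy
  refine setIntegral_nonneg measurableSet_Ioo fun u hu => ?_
  have hbase : 0 ≤ 1 - u * y := by nlinarith [hy.1, hy.2, hu.1, hu.2]
  exact mul_nonneg (pow_nonneg hbase j) (by linarith [hu.1])

lemma Continuous.integrable_of_ae_mem_Icc {μ : Measure ℝ} [IsFiniteMeasure μ] {a b : ℝ}
    (hμ : ∀ᵐ x ∂μ, x ∈ Icc a b) {f : ℝ → ℝ} (hf : Continuous f) : Integrable f μ := by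
  rw [← Measure.restrict_eq_self_of_ae_mem hμ]
  exact hf.continuousOn.integrableOn_compact isCompact_Icc

lemma mul_integral_eq_of_integral_eq_zero {μ : Measure ℝ} {f p q : ℝ → ℝ} {l l₀ : ℝ}
    (hp : Integrable p μ) (hq : Integrable q μ) (hf : f =ᵐ[μ] fun x => -l * p x + l₀ * q x)
    (h0 : ∫ x, f x ∂μ = 0) : l * ∫ x, p x ∂μ = l₀ * ∫ x, q x ∂μ := by
  rw [integral_congr_ae hf, integral_add (hp.const_mul _) (hq.const_mul _),
    integral_const_mul, integral_const_mul] at h0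
  linarith

lemma eq_prod_div_prod_of_mul_eq_mul {K : Type*} [Field K] {a b I : ℕ → K} (h0 : I 0 = 1)
    (hb : ∀ n, b (n + 1) ≠ 0) (hI : ∀ n, b (n + 1) * I (n + 1) = a (n + 1) * I n) (n : ℕ) :
    I n = (∏ j ∈ Finset.Icc 1 n, a j) / ∏ j ∈ Finset.Icc 1 n, b j := by
  induction n with
  | zero => simp [h0]
  | succ n ih =>
    have hprod : ∏ j ∈ Finset.Icc 1 n, b j ≠ 0 :=
      Finset.prod_ne_zero_iff.mpr fun j hj => by
        obtain ⟨k, rfl⟩ := Nat.exists_eq_add_of_le' (Finset.mem_Icc.mp hj).1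
        exact hb k
    have hIn : I n * ∏ j ∈ Finset.Icc 1 n, b j = ∏ j ∈ Finset.Icc 1 n, a j := by
      rw [ih, div_mul_cancel₀ _ hprod]
    rw [Finset.prod_Icc_succ_top (by omega), Finset.prod_Icc_succ_top (by omega),
      eq_div_iff (mul_ne_zero hprod (hb n))]
    linear_combination (∏ j ∈ Finset.Icc 1 n, b j) * hI n + a (n + 1) * hIn

theorem stmt16_general (F : Measure ℝ)
    (hF : F (Set.Icc (0:ℝ) 1)ᶜ = 0)
    (θ₁ θ₂ : ℝ) (hθ₁ : 0 < θ₁) (hθ₂ : 0 < θ₂)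
    (g : ℕ → Polynomial ℝ) (hg0 : g 0 = 1)
    (hrec : ∀ n : ℕ, 1 ≤ n → ∀ x ∈ Set.Icc (0:ℝ) 1,
      Lop F θ₁ θ₂ (fun t => Polynomial.eval t (g n)) x
        = -(((n : ℝ) / 2) * (((n : ℝ) - 1) * expMom F (n - 2) + (θ₁ + θ₂))) *
            Polynomial.eval x (g n)
          + (((n : ℝ) / 2) * (((n : ℝ) - 1) * expMom F (n - 2) + θ₁)) *
            Polynomial.eval x (g (n - 1)))
    (μ : Measure ℝ) [IsProbabilityMeasure μ] (hμ : μ (Set.Icc (0:ℝ) 1)ᶜ = 0)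
    (hstat : ∀ p : Polynomial ℝ, ∫ x, Lop F θ₁ θ₂ (fun t => Polynomial.eval t p) x ∂μ = 0) :
    ∀ n : ℕ, 1 ≤ n →
      ∫ x, Polynomial.eval x (g n) ∂μ
        = (∏ j ∈ Finset.Icc 1 n, (((j : ℝ) - 1) * expMom F (j - 2) + θ₁)) /
          (∏ j ∈ Finset.Icc 1 n, (((j : ℝ) - 1) * expMom F (j - 2) + (θ₁ + θ₂))) := by
  have hsupp : ∀ᵐ x ∂μ, x ∈ Icc (0:ℝ) 1 := ae_iff.mpr hμ
  have hint (p : Polynomial ℝ) := p.continuous.integrable_of_ae_mem_Icc hsupp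
  intro n _
  refine eq_prod_div_prod_of_mul_eq_mul (I := fun n => ∫ x, (g n).eval x ∂μ)
    (a := fun j => ((j : ℝ) - 1) * expMom F (j - 2) + θ₁)
    (b := fun j => ((j : ℝ) - 1) * expMom F (j - 2) + (θ₁ + θ₂))
    (by simp [hg0]) (fun n => ?_) (fun n => ?_) n
  · have := expMom_nonneg F hF (n + 1 - 2)
    push_cast
    rw [add_sub_cancel_right]
    positivity
  · have hmoment := mul_integral_eq_of_integral_eq_zero (hint (g (n + 1))) (hint (g n))
      (by filter_upwards [hsupp] with x hx using hrec (n + 1) (by omega) x hx) (hstat (g (n + 1)))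
    have hhalf : ((n + 1 : ℕ) : ℝ) / 2 ≠ 0 := by positivity
    simpa only [mul_assoc, mul_right_inj' hhalf] using hmoment

/-- if the polynomials `g_n` satisfy `L g_n = -λ_n g_n + λ_n° g_{n-1}` with
`λ_n = (n/2)((n-1)E[(1-W)^{n-2}] + θ)` and `λ_n° = (n/2)((n-1)E[(1-W)^{n-2}] + θ₁)`,
and `μ` is stationary, then `∫ g_n dμ` equals the Beta-moment analogue. -/
theorem stmt16 (F : Measure ℝ) [IsProbabilityMeasure F]
    (hF : F (Set.Icc (0:ℝ) 1)ᶜ = 0)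
    (θ₁ θ₂ : ℝ) (hθ₁ : 0 < θ₁) (hθ₂ : 0 < θ₂)
    (g : ℕ → Polynomial ℝ) (hg0 : g 0 = 1)
    (hrec : ∀ n : ℕ, 1 ≤ n → ∀ x ∈ Set.Icc (0:ℝ) 1,
      Lop F θ₁ θ₂ (fun t => Polynomial.eval t (g n)) x
        = -(((n : ℝ) / 2) * (((n : ℝ) - 1) * expMom F (n - 2) + (θ₁ + θ₂))) *
            Polynomial.eval x (g n)
          + (((n : ℝ) / 2) * (((n : ℝ) - 1) * expMom F (n - 2) + θ₁)) *
            Polynomial.eval x (g (n - 1)))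
    (μ : Measure ℝ) [IsProbabilityMeasure μ] (hμ : μ (Set.Icc (0:ℝ) 1)ᶜ = 0)
    (hstat : ∀ p : Polynomial ℝ, ∫ x, Lop F θ₁ θ₂ (fun t => Polynomial.eval t p) x ∂μ = 0) :
    ∀ n : ℕ, 1 ≤ n →
      ∫ x, Polynomial.eval x (g n) ∂μ
        = (∏ j ∈ Finset.Icc 1 n, (((j : ℝ) - 1) * expMom F (j - 2) + θ₁)) /
          (∏ j ∈ Finset.Icc 1 n, (((j : ℝ) - 1) * expMom F (j - 2) + (θ₁ + θ₂))) :=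
  stmt16_general F hF θ₁ θ₂ hθ₁ hθ₂ g hg0 hrec μ hμ hstat
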